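/- Set π_L = σ_L² σ_U^{-2} e^{-12K₀/σ_L²} and π_U = π_L^{-1} = σ_U² σ_L^{-2} e^{12K₀/σ_L²}. Then for every measurable function b : [0,1] → ℝ with |b(x)| ≤ K₀ for all x ∈ [0,1], the invariant density satisfies π_L ≤ π_b(x) ≤ π_U for all x ∈ [0,1]. -/
import Mathlib


open MeasureTheory Real

/-- `I_b(x) = ∫₀ˣ 2 b(y) / σ(y)² dy`. -/
noncomputable def Ib (σ b : ℝ → ℝ) (x : ℝ) : ℝ :=
  ∫ y in (0:ℝ)..x, 2 * b y / (σ y) ^ 2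

/-- The normalising constant `H_b`. -/
noncomputable def Hb (σ b : ℝ → ℝ) : ℝ :=
  ∫ x in (0:ℝ)..1, (Real.exp (Ib σ b x) / (σ x) ^ 2) *
    (Real.exp (Ib σ b 1) * (∫ y in x..(1:ℝ), Real.exp (-(Ib σ b y))) +
      ∫ y in (0:ℝ)..x, Real.exp (-(Ib σ b y)))

/-- The invariant density `π_b`. -/
noncomputable def πb (σ b : ℝ → ℝ) (x : ℝ) : ℝ :=
  (Real.exp (Ib σ b x) / (Hb σ b * (σ x) ^ 2)) *
    (Real.exp (Ib σ b 1) * (∫ y in x..(1:ℝ), Real.exp (-(Ib σ b y))) +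
      ∫ y in (0:ℝ)..x, Real.exp (-(Ib σ b y)))

set_option maxHeartbeats 2000000 in
theorem statement1 (K₀ σL σU : ℝ) (hK₀ : 0 < K₀) (hσL : 0 < σL) (hσLU : σL ≤ σU)
    (σ : ℝ → ℝ) (hσmeas : Measurable σ)
    (hσlb : ∀ x ∈ Set.Icc (0:ℝ) 1, σL ≤ σ x)
    (hσub : ∀ x ∈ Set.Icc (0:ℝ) 1, σ x ≤ σU)
    (b : ℝ → ℝ) (hbmeas : Measurable b)
    (hb : ∀ x ∈ Set.Icc (0:ℝ) 1, |b x| ≤ K₀) :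
    ∀ x ∈ Set.Icc (0:ℝ) 1,
      σL ^ 2 * (σU ^ 2)⁻¹ * Real.exp (-(12 * K₀ / σL ^ 2)) ≤ πb σ b x ∧
        πb σ b x ≤ σU ^ 2 * (σL ^ 2)⁻¹ * Real.exp (12 * K₀ / σL ^ 2) := by
  set c : ℝ := 2 * K₀ / σL ^ 2 with hc_def
  have hσL2 : (0:ℝ) < σL ^ 2 := by positivity
  have hσU : (0:ℝ) < σU := lt_of_lt_of_le hσL hσLU
  have hσU2 : (0:ℝ) < σU ^ 2 := by positivity
  have hc : 0 < c := by positivity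
  have hσ2lb : ∀ x ∈ Set.Icc (0:ℝ) 1, σL ^ 2 ≤ (σ x) ^ 2 := fun x hx =>
    pow_le_pow_left₀ hσL.le (hσlb x hx) 2
  have hσ2ub : ∀ x ∈ Set.Icc (0:ℝ) 1, (σ x) ^ 2 ≤ σU ^ 2 := fun x hx =>
    pow_le_pow_left₀ (hσL.le.trans (hσlb x hx)) (hσub x hx) 2
  have hσx2pos : ∀ x ∈ Set.Icc (0:ℝ) 1, (0:ℝ) < (σ x) ^ 2 := fun x hx =>
    lt_of_lt_of_le hσL2 (hσ2lb x hx)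
  -- bound on the integrand of Ib
  have hf_bound : ∀ y ∈ Set.Icc (0:ℝ) 1, |2 * b y / (σ y) ^ 2| ≤ c := by
    intro y hy
    rw [abs_div, abs_of_pos (hσx2pos y hy), hc_def]
    apply div_le_div₀ (by positivity) ?_ hσL2 (hσ2lb y hy)
    rw [abs_mul, abs_two]
    exact mul_le_mul_of_nonneg_left (hb y hy) (by norm_num)
  -- bound on Ib
  have hI : ∀ x ∈ Set.Icc (0:ℝ) 1, |Ib σ b x| ≤ c := by
    intro x hx
    have h1 : ∀ y ∈ Set.uIoc (0:ℝ) x, ‖2 * b y / (σ y) ^ 2‖ ≤ c := by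
      intro y hy
      rw [Set.uIoc_of_le hx.1] at hy
      exact hf_bound y ⟨hy.1.le, hy.2.trans hx.2⟩
    have := intervalIntegral.norm_integral_le_of_norm_le_const h1
    rw [Real.norm_eq_abs] at this
    calc |Ib σ b x| ≤ c * |x - 0| := this
      _ ≤ c * 1 := by
          apply mul_le_mul_of_nonneg_left _ hc.le
          rw [sub_zero, abs_of_nonneg hx.1]; exact hx.2
      _ = c := mul_one c
  have hexpI_lb : ∀ x ∈ Set.Icc (0:ℝ) 1, Real.exp (-c) ≤ Real.exp (Ib σ b x) := fun x hx =>
    Real.exp_le_exp.2 (neg_le_of_abs_le (hI x hx))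
  have hexpI_ub : ∀ x ∈ Set.Icc (0:ℝ) 1, Real.exp (Ib σ b x) ≤ Real.exp c := fun x hx =>
    Real.exp_le_exp.2 (le_of_abs_le (hI x hx))
  set g : ℝ → ℝ := fun y => Real.exp (-(Ib σ b y)) with hg_def
  have hg_lb : ∀ x ∈ Set.Icc (0:ℝ) 1, Real.exp (-c) ≤ g x := fun x hx =>
    Real.exp_le_exp.2 (neg_le_neg (le_of_abs_le (hI x hx)))
  have hg_ub : ∀ x ∈ Set.Icc (0:ℝ) 1, g x ≤ Real.exp c := fun x hx =>
    Real.exp_le_exp.2 ((neg_le_abs _).trans (hI x hx))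
  -- integrability of the integrand of Ib
  have hfmeas : Measurable fun y => 2 * b y / (σ y) ^ 2 :=
    (measurable_const.mul hbmeas).div (hσmeas.pow_const 2)
  have hfint : IntegrableOn (fun y => 2 * b y / (σ y) ^ 2) (Set.Icc (0:ℝ) 1) := by
    refine ⟨hfmeas.aestronglyMeasurable, ?_⟩
    apply MeasureTheory.HasFiniteIntegral.of_bounded (C := c)
    filter_upwards [ae_restrict_mem measurableSet_Icc] with y hy
    rw [Real.norm_eq_abs]
    exact hf_bound y hy
  have huIcc : Set.uIcc (0:ℝ) 1 = Set.Icc (0:ℝ) 1 := Set.uIcc_of_le zero_le_one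
  have hIcont : ContinuousOn (Ib σ b) (Set.Icc (0:ℝ) 1) := by
    have := intervalIntegral.continuousOn_primitive_interval (a := 0) (b := 1)
      (f := fun y => 2 * b y / (σ y) ^ 2) (μ := volume) (by rwa [huIcc])
    rw [huIcc] at this
    exact this
  have hgcont : ContinuousOn g (Set.Icc (0:ℝ) 1) :=
    Real.continuous_exp.comp_continuousOn hIcont.neg
  have hgIntOn : IntegrableOn g (Set.Icc (0:ℝ) 1) :=
    hgcont.integrableOn_Icc
  have hgint : ∀ x ∈ Set.Icc (0:ℝ) 1, ∀ z ∈ Set.Icc (0:ℝ) 1,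
      IntervalIntegrable g volume x z := by
    intro x hx z hz
    exact (hgIntOn.mono_set (Set.uIcc_subset_Icc hx hz)).intervalIntegrable
  -- bounds on the two inner integrals, for t ∈ [0,1]
  have hA_lb : ∀ t ∈ Set.Icc (0:ℝ) 1, (1 - t) * Real.exp (-c) ≤ ∫ y in t..(1:ℝ), g y := by
    intro t ht
    have := intervalIntegral.integral_mono_on (μ := volume) (a := t) (b := 1)
      (f := fun _ => Real.exp (-c)) (g := g) ht.2 (intervalIntegrable_const)
      (hgint t ht 1 (by norm_num))
      (fun y hy => hg_lb y ⟨ht.1.trans hy.1, hy.2⟩)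
    simpa using this
  have hA_ub : ∀ t ∈ Set.Icc (0:ℝ) 1, (∫ y in t..(1:ℝ), g y) ≤ (1 - t) * Real.exp c := by
    intro t ht
    have := intervalIntegral.integral_mono_on (μ := volume) (a := t) (b := 1)
      (f := g) (g := fun _ => Real.exp c) ht.2
      (hgint t ht 1 (by norm_num)) (intervalIntegrable_const)
      (fun y hy => hg_ub y ⟨ht.1.trans hy.1, hy.2⟩)
    simpa using this
  have hB_lb : ∀ t ∈ Set.Icc (0:ℝ) 1, t * Real.exp (-c) ≤ ∫ y in (0:ℝ)..t, g y := by
    intro t ht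
    have := intervalIntegral.integral_mono_on (μ := volume) (a := 0) (b := t)
      (f := fun _ => Real.exp (-c)) (g := g) ht.1 (intervalIntegrable_const)
      (hgint 0 (by norm_num) t ht)
      (fun y hy => hg_lb y ⟨hy.1, hy.2.trans ht.2⟩)
    simpa using this
  have hB_ub : ∀ t ∈ Set.Icc (0:ℝ) 1, (∫ y in (0:ℝ)..t, g y) ≤ t * Real.exp c := by
    intro t ht
    have := intervalIntegral.integral_mono_on (μ := volume) (a := 0) (b := t)
      (f := g) (g := fun _ => Real.exp c) ht.1
      (hgint 0 (by norm_num) t ht) (intervalIntegrable_const)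
      (fun y hy => hg_ub y ⟨hy.1, hy.2.trans ht.2⟩)
    simpa using this
  -- the function G
  set G : ℝ → ℝ := fun t => Real.exp (Ib σ b 1) * (∫ y in t..(1:ℝ), g y) +
      ∫ y in (0:ℝ)..t, g y with hG_def
  have h1mem : (1:ℝ) ∈ Set.Icc (0:ℝ) 1 := by norm_num
  have hG_lb : ∀ t ∈ Set.Icc (0:ℝ) 1, Real.exp (-(2*c)) ≤ G t := by
    intro t ht
    have hAlb := hA_lb t ht
    have hBlb := hB_lb t ht
    have h1 : Real.exp (-c) * ((1 - t) * Real.exp (-c)) ≤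
        Real.exp (Ib σ b 1) * (∫ y in t..(1:ℝ), g y) := by
      apply mul_le_mul (hexpI_lb 1 h1mem) hAlb _ (Real.exp_pos _).le
      have : (0:ℝ) ≤ 1 - t := by linarith [ht.2]
      positivity
    have e1 : Real.exp (-c) * Real.exp (-c) = Real.exp (-(2*c)) := by
      rw [← Real.exp_add]; ring_nf
    have hcc : Real.exp (-(2*c)) ≤ Real.exp (-c) := Real.exp_le_exp.2 (by linarith)
    have h2 : t * Real.exp (-(2*c)) ≤ t * Real.exp (-c) :=
      mul_le_mul_of_nonneg_left hcc ht.1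
    simp only [hG_def]
    nlinarith [ht.1, ht.2]
  have hG_ub : ∀ t ∈ Set.Icc (0:ℝ) 1, G t ≤ Real.exp (2*c) := by
    intro t ht
    have hAub := hA_ub t ht
    have hAlb := hA_lb t ht
    have hBub := hB_ub t ht
    have hAnn : (0:ℝ) ≤ ∫ y in t..(1:ℝ), g y := by
      have : (0:ℝ) ≤ (1 - t) * Real.exp (-c) := by
        have : (0:ℝ) ≤ 1 - t := by linarith [ht.2]
        positivity
      linarith
    have h1 : Real.exp (Ib σ b 1) * (∫ y in t..(1:ℝ), g y) ≤
        Real.exp c * ((1 - t) * Real.exp c) :=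
      mul_le_mul (hexpI_ub 1 h1mem) hAub hAnn (Real.exp_pos _).le
    have e1 : Real.exp c * Real.exp c = Real.exp (2*c) := by
      rw [← Real.exp_add]; ring_nf
    have hcc : Real.exp c ≤ Real.exp (2*c) := Real.exp_le_exp.2 (by linarith)
    have h2 : t * Real.exp c ≤ t * Real.exp (2*c) :=
      mul_le_mul_of_nonneg_left hcc ht.1
    simp only [hG_def]
    nlinarith [ht.1, ht.2]
  have hG_nonneg : ∀ t ∈ Set.Icc (0:ℝ) 1, (0:ℝ) ≤ G t := fun t ht =>
    le_trans (Real.exp_pos _).le (hG_lb t ht)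
  -- the function F
  set F : ℝ → ℝ := fun t => Real.exp (Ib σ b t) / (σ t) ^ 2 * G t with hF_def
  set m : ℝ := Real.exp (-(3*c)) / σU ^ 2 with hm_def
  set M : ℝ := Real.exp (3*c) / σL ^ 2 with hM_def
  have hm : 0 < m := by positivity
  have hM : 0 < M := by positivity
  have hF_lb : ∀ t ∈ Set.Icc (0:ℝ) 1, m ≤ F t := by
    intro t ht
    have h1 : Real.exp (-c) / σU ^ 2 ≤ Real.exp (Ib σ b t) / (σ t) ^ 2 :=
      div_le_div₀ (Real.exp_pos _).le (hexpI_lb t ht) (hσx2pos t ht) (hσ2ub t ht)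
    have h2 : Real.exp (-c) / σU ^ 2 * Real.exp (-(2*c)) ≤ F t := by
      apply mul_le_mul h1 (hG_lb t ht) (Real.exp_pos _).le
      positivity
    calc m = Real.exp (-c) / σU ^ 2 * Real.exp (-(2*c)) := by
          rw [hm_def, div_mul_eq_mul_div, ← Real.exp_add]; ring_nf
      _ ≤ F t := h2
  have hF_ub : ∀ t ∈ Set.Icc (0:ℝ) 1, F t ≤ M := by
    intro t ht
    have h1 : Real.exp (Ib σ b t) / (σ t) ^ 2 ≤ Real.exp c / σL ^ 2 :=
      div_le_div₀ (Real.exp_pos _).le (hexpI_ub t ht) hσL2 (hσ2lb t ht)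
    have h2 : F t ≤ Real.exp c / σL ^ 2 * Real.exp (2*c) := by
      apply mul_le_mul h1 (hG_ub t ht) (hG_nonneg t ht)
      positivity
    calc F t ≤ Real.exp c / σL ^ 2 * Real.exp (2*c) := h2
      _ = M := by rw [hM_def, div_mul_eq_mul_div, ← Real.exp_add]; ring_nf
  -- integrability of F
  have hAcont : ContinuousOn (fun t => ∫ y in t..(1:ℝ), g y) (Set.Icc (0:ℝ) 1) := by
    have := intervalIntegral.continuousOn_primitive_interval_left (a := 0) (b := 1)
      (f := g) (μ := volume) (by rwa [huIcc])
    rwa [huIcc] at this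
  have hBcont : ContinuousOn (fun t => ∫ y in (0:ℝ)..t, g y) (Set.Icc (0:ℝ) 1) := by
    have := intervalIntegral.continuousOn_primitive_interval (a := 0) (b := 1)
      (f := g) (μ := volume) (by rwa [huIcc])
    rwa [huIcc] at this
  have hGcont : ContinuousOn G (Set.Icc (0:ℝ) 1) :=
    (continuousOn_const.mul hAcont).add hBcont
  have hFmeas : AEStronglyMeasurable F (volume.restrict (Set.Icc (0:ℝ) 1)) := by
    rw [hF_def]
    have h1 : AEMeasurable (fun t => Real.exp (Ib σ b t)) (volume.restrict (Set.Icc (0:ℝ) 1)) :=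
      (Real.continuous_exp.comp_continuousOn hIcont).aemeasurable measurableSet_Icc
    have h2 : AEMeasurable (fun t => (σ t) ^ 2) (volume.restrict (Set.Icc (0:ℝ) 1)) :=
      (hσmeas.pow_const 2).aemeasurable
    have h3 : AEMeasurable G (volume.restrict (Set.Icc (0:ℝ) 1)) :=
      hGcont.aemeasurable measurableSet_Icc
    exact ((h1.div h2).mul h3).aestronglyMeasurable
  have hFIntOn : IntegrableOn F (Set.Icc (0:ℝ) 1) := by
    refine ⟨hFmeas, ?_⟩
    apply MeasureTheory.HasFiniteIntegral.of_bounded (C := M)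
    filter_upwards [ae_restrict_mem measurableSet_Icc] with y hy
    rw [Real.norm_eq_abs, abs_of_nonneg]
    · exact hF_ub y hy
    · exact le_trans hm.le (hF_lb y hy)
  have hFint : IntervalIntegrable F volume 0 1 := by
    rw [intervalIntegrable_iff_integrableOn_Icc_of_le zero_le_one]
    exact hFIntOn
  -- H = ∫ F, and its bounds
  have hHF : Hb σ b = ∫ t in (0:ℝ)..1, F t := rfl
  have hH_lb : m ≤ Hb σ b := by
    rw [hHF]
    have := intervalIntegral.integral_mono_on (μ := volume) (a := 0) (b := 1)
      (f := fun _ => m) (g := F) zero_le_one intervalIntegrable_const hFint hF_lb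
    simpa using this
  have hH_ub : Hb σ b ≤ M := by
    rw [hHF]
    have := intervalIntegral.integral_mono_on (μ := volume) (a := 0) (b := 1)
      (f := F) (g := fun _ => M) zero_le_one hFint intervalIntegrable_const hF_ub
    simpa using this
  have hH0 : 0 < Hb σ b := lt_of_lt_of_le hm hH_lb
  -- final bounds
  intro x hx
  have hπ : πb σ b x = F x / Hb σ b := by
    simp only [πb, hF_def, hG_def, hg_def]
    field_simp
  have hlow : m / M ≤ πb σ b x := by
    rw [hπ]
    exact div_le_div₀ (le_trans hm.le (hF_lb x hx)) (hF_lb x hx) hH0 hH_ub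
  have hhigh : πb σ b x ≤ M / m := by
    rw [hπ]
    exact div_le_div₀ hM.le (hF_ub x hx) hm hH_lb
  constructor
  · calc σL ^ 2 * (σU ^ 2)⁻¹ * Real.exp (-(12 * K₀ / σL ^ 2)) = m / M := by
          rw [hm_def, hM_def, div_div_div_comm, ← Real.exp_sub]
          have h6 : -(3*c) - 3*c = -(12 * K₀ / σL ^ 2) := by rw [hc_def]; ring
          rw [h6, div_div_eq_mul_div]
          ring
      _ ≤ πb σ b x := hlow
  · calc πb σ b x ≤ M / m := hhigh
      _ = σU ^ 2 * (σL ^ 2)⁻¹ * Real.exp (12 * K₀ / σL ^ 2) := by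
          rw [hm_def, hM_def, div_div_div_comm, ← Real.exp_sub]
          have h6 : 3*c - -(3*c) = 12 * K₀ / σL ^ 2 := by rw [hc_def]; ring
          rw [h6, div_div_eq_mul_div]
          ring
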